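/- arXiv:2604.09972 — 2 statements merged into one kernel-verified Lean document; each statement's English description precedes it below -/
import Mathlib

section
/- Let r be a positive integer and α a real number with α ≥ 2. If there exist an integer s with 1 ≤ s ≤ r and elements q₁, q₂, …, q_s ∈ ℒ_r(α) (repetitions allowed) such that ∑_{i=1}^s q_i⁻¹ = α − s, then there exists a finite tree T with at least 2 vertices, maximum degree Δ(T) ≤ r and Laplacian spectral radius μ(T) = α. -/
/-!
The elements of `ℒ_r(α)` are the weight ratios `x_parent / x_v` of positive weights `x` on rooted
trees of maximum degree `≤ r` that satisfy the signless-Laplacian equation `(Q x)_v = α x_v` at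
every non-root vertex: if the children of `v` have ratios `q₁, …, q_s`, this equation reads
`(s + 1) x_v + x_parent + ∑ x_v / qᵢ = α x_v`, i.e. `x_parent / x_v = α - 1 - s - ∑ qᵢ⁻¹`.
Hanging `s` such branches below a common root with `∑ qᵢ⁻¹ = α - s` makes the equation hold at the
root too, so `Q x = α x` with `x > 0`. As `|L| ≤ Q` entrywise and `Q` is symmetric, the positive
vector `x` bounds every Laplacian eigenvalue by `α`; as a tree is bipartite, changing the sign of
`x` on one colour class gives a Laplacian eigenvector for `α`.
-/

open Finset

/-- The set `ℒ_r(α)`: the smallest set of reals containing `α - 1` and closed under the rule: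
for `1 ≤ s ≤ r - 1` and `q₁, …, q_s ∈ ℒ_r(α)`, if `β := α − 1 − s − ∑ qᵢ⁻¹ > 0`
then `β ∈ ℒ_r(α)`. -/
inductive LSet (r : ℕ) (α : ℝ) : ℝ → Prop
  | base : LSet r α (α - 1)
  | step (s : ℕ) (hs1 : 1 ≤ s) (hsr : s ≤ r - 1) (q : Fin s → ℝ)
      (hmem : ∀ i, LSet r α (q i))
      (hpos : 0 < α - 1 - (s : ℝ) - ∑ i, (q i)⁻¹) :
      LSet r α (α - 1 - (s : ℝ) - ∑ i, (q i)⁻¹)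

/-- `μ` is the Laplacian spectral radius of `G`, i.e. the largest eigenvalue of the
Laplacian matrix `D(G) - A(G)`. -/
def IsLapSpecRad {V : Type} [Fintype V] (G : SimpleGraph V) (μ : ℝ) : Prop :=
  letI := Classical.decEq V
  letI := Classical.decRel G.Adj
  μ ∈ spectrum ℝ (G.lapMatrix ℝ) ∧ ∀ x ∈ spectrum ℝ (G.lapMatrix ℝ), x ≤ μ

/-- The maximum degree of a finite simple graph. -/
noncomputable def maxDeg {V : Type} [Fintype V] (G : SimpleGraph V) : ℕ :=
  letI := Classical.decRel G.Adj
  G.maxDegree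


namespace Matrix

variable {n : Type*} [Fintype n] [DecidableEq n]

lemma mem_spectrum_iff_exists_mulVec_eq_smul {K : Type*} [Field K] {M : Matrix n n K} {μ : K} :
    μ ∈ spectrum K M ↔ ∃ v ≠ 0, M *ᵥ v = μ • v := by
  rw [← spectrum_toLin', ← Module.End.hasEigenvalue_iff_mem_spectrum,
    Module.End.hasEigenvalue_iff, Submodule.ne_bot_iff]
  simp only [Module.End.mem_eigenspace_iff, toLin'_apply]
  exact exists_congr fun v => and_comm

lemma abs_le_of_mem_spectrum_of_abs_le {L Q : Matrix n n ℝ} (hLQ : ∀ i j, |L i j| ≤ Q i j)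
    {x : n → ℝ} (hx : ∀ i, 0 < x i) {α : ℝ} (hQx : x ᵥ* Q = α • x) {μ : ℝ}
    (hμ : μ ∈ spectrum ℝ L) : |μ| ≤ α := by
  obtain ⟨y, hy0, hy⟩ : ∃ y : n → ℝ, y ≠ 0 ∧ L *ᵥ y = μ • y :=
    mem_spectrum_iff_exists_mulVec_eq_smul.1 hμ
  have hbound : |μ| • |y| ≤ Q *ᵥ |y| := fun i => calc
    |μ| * |y i| = |∑ j, L i j * y j| := by
        rw [← abs_mul, ← smul_eq_mul, ← Pi.smul_apply, ← hy]; rfl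
    _ ≤ ∑ j, |L i j| * |y j| := by
        simpa only [abs_mul] using abs_sum_le_sum_abs (fun j => L i j * y j) univ
    _ ≤ (Q *ᵥ |y|) i := sum_le_sum fun j _ =>
        mul_le_mul_of_nonneg_right (hLQ i j) (abs_nonneg _)
  have hpos : 0 < x ⬝ᵥ |y| := by
    obtain ⟨i, hi⟩ := Function.ne_iff.1 hy0
    exact sum_pos' (fun j _ => mul_nonneg (hx j).le (abs_nonneg _))
      ⟨i, mem_univ _, mul_pos (hx i) (abs_pos.2 hi)⟩
  refine le_of_mul_le_mul_right ?_ hpos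
  calc |μ| * (x ⬝ᵥ |y|) = x ⬝ᵥ (|μ| • |y|) := by rw [dotProduct_smul, smul_eq_mul]
    _ ≤ x ⬝ᵥ (Q *ᵥ |y|) := dotProduct_le_dotProduct_of_nonneg_left hbound fun i => (hx i).le
    _ = α * (x ⬝ᵥ |y|) := by rw [dotProduct_mulVec, hQx, smul_dotProduct, smul_eq_mul]

end Matrix

open Matrix

namespace SimpleGraph

variable {V : Type*} [Fintype V] [DecidableEq V] (G : SimpleGraph V) [DecidableRel G.Adj]

def signlessLapMatrix (R : Type*) [AddMonoidWithOne R] : Matrix V V R :=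
  G.degMatrix R + G.adjMatrix R

theorem isSymm_signlessLapMatrix (R : Type*) [AddMonoidWithOne R] :
    (G.signlessLapMatrix R).IsSymm :=
  (G.isSymm_degMatrix R).add G.isSymm_adjMatrix

theorem signlessLapMatrix_mulVec_apply {R : Type*} [NonAssocSemiring R] (v : V) (x : V → R) :
    (G.signlessLapMatrix R *ᵥ x) v = G.degree v * x v + ∑ u ∈ G.neighborFinset v, x u := by
  rw [signlessLapMatrix, Matrix.add_mulVec, Pi.add_apply, degMatrix_mulVec_apply,
    adjMatrix_mulVec_apply]

theorem abs_lapMatrix_apply (i j : V) : |G.lapMatrix ℝ i j| = G.signlessLapMatrix ℝ i j := by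
  by_cases h : i = j
  · subst h
    simp [lapMatrix, signlessLapMatrix, degMatrix]
  · by_cases hadj : G.Adj i j <;> simp [lapMatrix, signlessLapMatrix, degMatrix, h, hadj]

variable {G}

theorem le_of_mem_spectrum_lapMatrix {x : V → ℝ} (hx : ∀ v, 0 < x v) {α : ℝ}
    (hQx : G.signlessLapMatrix ℝ *ᵥ x = α • x) {μ : ℝ} (hμ : μ ∈ spectrum ℝ (G.lapMatrix ℝ)) :
    μ ≤ α := by
  refine (le_abs_self μ).trans (Matrix.abs_le_of_mem_spectrum_of_abs_le
    (fun i j => (G.abs_lapMatrix_apply i j).le) hx ?_ hμ)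
  rw [← Matrix.mulVec_transpose, G.isSymm_signlessLapMatrix ℝ, hQx]

theorem mem_spectrum_lapMatrix_of_colorable_two (hG : G.Colorable 2) {x : V → ℝ} (hx : x ≠ 0)
    {α : ℝ} (hQx : G.signlessLapMatrix ℝ *ᵥ x = α • x) : α ∈ spectrum ℝ (G.lapMatrix ℝ) := by
  obtain ⟨C⟩ := hG
  set σ : V → ℝ := fun v => if C v = 0 then 1 else -1
  have hσ_ne : ∀ v, σ v ≠ 0 := fun v => by by_cases h : C v = 0 <;> simp [σ, h]
  have hσ_adj : ∀ {u v}, G.Adj u v → σ u = -σ v := fun {u v} huv => by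
    have := C.valid huv
    simp only [σ]
    revert this
    generalize C u = a
    generalize C v = b
    fin_cases a <;> fin_cases b <;> simp
  refine Matrix.mem_spectrum_iff_exists_mulVec_eq_smul.2 ⟨σ * x, fun h => hx ?_, funext fun v => ?_⟩
  · funext v
    exact (mul_eq_zero.1 (congrFun h v)).resolve_left (hσ_ne v)
  · have hv := congrFun hQx v
    rw [signlessLapMatrix_mulVec_apply, Pi.smul_apply, smul_eq_mul] at hv
    have hnbr : ∑ u ∈ G.neighborFinset v, (σ * x) u = -σ v * ∑ u ∈ G.neighborFinset v, x u := by
      rw [mul_sum]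
      refine sum_congr rfl fun u hu => ?_
      rw [Pi.mul_apply, hσ_adj ((G.mem_neighborFinset v u).1 hu).symm]
    rw [lapMatrix_mulVec_apply, hnbr, Pi.smul_apply, Pi.mul_apply, smul_eq_mul]
    linear_combination σ v * hv

end SimpleGraph

theorem isLapSpecRad_of_colorable_two {V : Type} [Fintype V] [DecidableEq V] [Nonempty V]
    {G : SimpleGraph V} [DecidableRel G.Adj] (hG : G.Colorable 2) {x : V → ℝ} (hx : ∀ v, 0 < x v)
    {α : ℝ} (hQx : G.signlessLapMatrix ℝ *ᵥ x = α • x) : IsLapSpecRad G α := by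
  have hx0 : x ≠ 0 := fun h => (hx (Classical.arbitrary V)).ne' (congrFun h _)
  unfold IsLapSpecRad
  convert (⟨SimpleGraph.mem_spectrum_lapMatrix_of_colorable_two hG hx0 hQx,
    fun μ hμ => SimpleGraph.le_of_mem_spectrum_lapMatrix hx hQx hμ⟩ :
    α ∈ spectrum ℝ (G.lapMatrix ℝ) ∧ ∀ μ ∈ spectrum ℝ (G.lapMatrix ℝ), μ ≤ α)

namespace SimpleGraph

/- On a cycle, the largest vertex has two distinct neighbours, both smaller. -/
theorem isAcyclic_of_forall_adj_lt_unique {V : Type*} [LinearOrder V] {G : SimpleGraph V}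
    (h : ∀ ⦃v a b⦄, G.Adj v a → G.Adj v b → a < v → b < v → a = b) : G.IsAcyclic := by
  intro v c hc
  obtain ⟨M, hM, hmax⟩ := c.support.toFinset.exists_max_image id ⟨v, by simp⟩
  rw [List.mem_toFinset] at hM
  set c' := c.rotate M hM
  have hc' : c'.IsCycle := hc.rotate hM
  have hlt : ∀ {w}, G.Adj M w → w ∈ c'.support → w < M := fun {w} hw hmem =>
    lt_of_le_of_ne (hmax w (by simpa [c'] using hmem)) hw.ne'
  have hnil := hc'.not_nil
  exact hc'.snd_ne_penultimate <| h (c'.adj_snd hnil) (c'.adj_penultimate hnil).symm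
    (hlt (c'.adj_snd hnil) (c'.getVert_mem_support 1))
    (hlt (c'.adj_penultimate hnil).symm (c'.getVert_mem_support _))

end SimpleGraph

namespace ParentTree

/- Vertices are `0, …, n - 1` with root `0`; `f` is the parent map, with `f i < i` for `i > 0`
(values of `f` outside this range are irrelevant). -/
def children (n : ℕ) (f : ℕ → ℕ) (v : ℕ) : Finset ℕ := {j ∈ Ico 1 n | f j = v}

theorem mem_children {n : ℕ} {f : ℕ → ℕ} {v j : ℕ} :
    j ∈ children n f v ↔ 1 ≤ j ∧ j < n ∧ f j = v := by
  simp [children, and_assoc]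

def graph (n : ℕ) (f : ℕ → ℕ) : SimpleGraph (Fin n) where
  Adj a b := (a < b ∧ f b = a) ∨ (b < a ∧ f a = b)
  symm := ⟨fun _ _ => Or.symm⟩
  loopless := ⟨fun _ h => by rcases h with ⟨h, _⟩ | ⟨h, _⟩ <;> exact lt_irrefl _ h⟩

variable {n : ℕ} {f : ℕ → ℕ}

theorem graph_adj {a b : Fin n} :
    (graph n f).Adj a b ↔ (a < b ∧ f b = a) ∨ (b < a ∧ f a = b) := Iff.rfl

theorem card_children_lt_self (hn : 0 < n) (v : ℕ) : #(children n f v) < n :=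
  (card_filter_le _ _).trans_lt (by simpa using hn)

theorem graph_isAcyclic : (graph n f).IsAcyclic :=
  SimpleGraph.isAcyclic_of_forall_adj_lt_unique fun v a b hva hvb hav hbv => by
    have ha : f v = a := ((graph_adj.1 hva).resolve_left fun h => h.1.asymm hav).2
    have hb : f v = b := ((graph_adj.1 hvb).resolve_left fun h => h.1.asymm hbv).2
    exact Fin.ext (ha.symm.trans hb)

section

variable (hf : ∀ i, 0 < i → i < n → f i < i)
include hf

theorem graph_reachable_zero (hn : 0 < n) (a : Fin n) : (graph n f).Reachable a ⟨0, hn⟩ := by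
  induction a using WellFoundedLT.induction with
  | ind a ih =>
    rcases Nat.eq_zero_or_pos a with h0 | hpos
    · rw [show a = ⟨0, hn⟩ from Fin.ext h0]
    · have hfa : f a < a := hf a hpos a.isLt
      let p : Fin n := ⟨f a, hfa.trans a.isLt⟩
      have hap : (graph n f).Adj a p := graph_adj.2 (Or.inr ⟨hfa, rfl⟩)
      exact hap.reachable.trans (ih p hfa)

theorem graph_isTree (hn : 0 < n) : (graph n f).IsTree := by
  have : Nonempty (Fin n) := ⟨⟨0, hn⟩⟩
  exact ⟨⟨fun a b => (graph_reachable_zero hf hn a).trans (graph_reachable_zero hf hn b).symm⟩,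
    graph_isAcyclic⟩

theorem disjoint_children_parent {a : ℕ} (ha : a < n) :
    Disjoint (children n f a) (if a = 0 then ∅ else {f a}) := by
  split_ifs with h0
  · exact disjoint_empty_right _
  · refine disjoint_singleton_right.2 fun hmem => ?_
    obtain ⟨h1, h2, h3⟩ := mem_children.1 hmem
    have := hf (f a) h1 h2
    have := hf a (Nat.pos_of_ne_zero h0) ha
    omega

theorem map_neighborFinset_graph [DecidableRel (graph n f).Adj] (a : Fin n) :
    ((graph n f).neighborFinset a).map Fin.valEmbedding =
      children n f a ∪ (if (a : ℕ) = 0 then ∅ else {f a}) := by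
  ext k
  simp only [mem_map, SimpleGraph.mem_neighborFinset, graph_adj, Fin.valEmbedding_apply,
    mem_union, mem_children]
  constructor
  · rintro ⟨u, ⟨hlt, hfu⟩ | ⟨hlt, hfa⟩, rfl⟩
    · exact Or.inl ⟨by omega, u.isLt, hfu⟩
    · right
      rw [if_neg (by omega)]
      simp [hfa]
  · rintro (⟨h1, h2, h3⟩ | hk)
    · exact ⟨⟨k, h2⟩, Or.inl ⟨show (a : ℕ) < k by have := hf k h1 h2; omega, h3⟩, rfl⟩
    · split_ifs at hk with h0
      · simp at hk
      · obtain rfl := mem_singleton.1 hk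
        have hfa : f a < a := hf a (Nat.pos_of_ne_zero h0) a.isLt
        exact ⟨⟨f a, hfa.trans a.isLt⟩, Or.inr ⟨hfa, rfl⟩, rfl⟩

theorem degree_graph [DecidableRel (graph n f).Adj] (a : Fin n) :
    (graph n f).degree a = #(children n f a) + if (a : ℕ) = 0 then 0 else 1 := by
  rw [← SimpleGraph.card_neighborFinset_eq_degree, ← card_map Fin.valEmbedding,
    map_neighborFinset_graph hf, card_union_of_disjoint (disjoint_children_parent hf a.isLt)]
  split_ifs <;> simp

theorem sum_neighborFinset_graph [DecidableRel (graph n f).Adj] (a : Fin n) (x : ℕ → ℝ) :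
    ∑ u ∈ (graph n f).neighborFinset a, x u =
      ∑ j ∈ children n f a, x j + if (a : ℕ) = 0 then 0 else x (f a) := by
  trans ∑ k ∈ ((graph n f).neighborFinset a).map Fin.valEmbedding, x k
  · rw [sum_map]; rfl
  rw [map_neighborFinset_graph hf, sum_union (disjoint_children_parent hf a.isLt)]
  split_ifs <;> simp

end

variable {r : ℕ} {α : ℝ}

/- At a non-root vertex `v`, of degree `#children + 1`, `eigen_eq` is `(Q x)_v = α x_v`; the root
is left free so that the tree can be hung below another vertex. -/
structure IsEigenTree (r : ℕ) (α : ℝ) (n : ℕ) (f : ℕ → ℕ) (x : ℕ → ℝ) : Prop where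
  pos : 0 < n
  parent_lt : ∀ i, 0 < i → i < n → f i < i
  weight_pos : ∀ i < n, 0 < x i
  weight_zero : x 0 = 1
  card_children_lt : ∀ v, 0 < v → v < n → #(children n f v) < r
  eigen_eq : ∀ v, 0 < v → v < n →
    (#(children n f v) + 1 : ℝ) * x v + x (f v) + ∑ j ∈ children n f v, x j = α * x v

theorem isEigenTree_one : IsEigenTree r α 1 (fun _ => 0) (fun _ => 1) :=
  ⟨one_pos, by omega, fun _ _ => one_pos, rfl, by omega, by omega⟩

theorem children_one (f : ℕ → ℕ) (v : ℕ) : children 1 f v = ∅ := by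
  simp [children]

/- Hung below a vertex of weight `1` with its weights scaled by `q⁻¹`, such a tree also satisfies
the equation at its root: `q` is the ratio of the weights of the parent and of the root. -/
def IsBranchRatio (r : ℕ) (α q : ℝ) : Prop :=
  0 < q ∧ ∃ n f x, IsEigenTree r α n f x ∧ #(children n f 0) < r ∧
    #(children n f 0) + ∑ j ∈ children n f 0, x j = α - 1 - q

/- The tree `(m, g, y)`, with weights scaled by `c` and vertices shifted by `n`, hung below the
root of `(n, f, x)`. -/
def graftParent (n : ℕ) (f g : ℕ → ℕ) (k : ℕ) : ℕ :=
  if k < n then f k else if k = n then 0 else n + g (k - n)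

def graftWeight (n : ℕ) (x y : ℕ → ℝ) (c : ℝ) (k : ℕ) : ℝ :=
  if k < n then x k else c * y (k - n)

section graft

variable {m : ℕ} {g : ℕ → ℕ} {x y : ℕ → ℝ} {c : ℝ}

theorem graftParent_of_lt {k : ℕ} (hk : k < n) : graftParent n f g k = f k := if_pos hk

theorem graftParent_add {k : ℕ} (hk : 0 < k) : graftParent n f g (n + k) = n + g k := by
  simp [graftParent, hk.ne']

theorem graftParent_self : graftParent n f g n = 0 := by
  simp [graftParent]

theorem graftWeight_of_lt {k : ℕ} (hk : k < n) : graftWeight n x y c k = x k := if_pos hk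

theorem graftWeight_add (k : ℕ) : graftWeight n x y c (n + k) = c * y k := by
  simp [graftWeight]

theorem graftWeight_self : graftWeight n x y c n = c * y 0 := by
  simp [graftWeight]

theorem children_graft_of_lt (hm : 0 < m) {v : ℕ} (hv0 : 0 < v) (hv : v < n) :
    children (n + m) (graftParent n f g) v = children n f v := by
  ext j
  simp only [mem_children, graftParent]
  constructor
  · rintro ⟨h1, h2, h3⟩
    split_ifs at h3 with hj hj2
    · exact ⟨h1, hj, h3⟩
    all_goals omega
  · rintro ⟨h1, h2, h3⟩
    exact ⟨h1, by omega, by rw [if_pos h2, h3]⟩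

theorem children_graft_zero (hn : 0 < n) (hm : 0 < m) :
    children (n + m) (graftParent n f g) 0 = insert n (children n f 0) := by
  ext j
  simp only [mem_children, mem_insert, graftParent]
  constructor
  · rintro ⟨h1, h2, h3⟩
    split_ifs at h3 with hj hj2
    · exact Or.inr ⟨h1, hj, h3⟩
    · exact Or.inl hj2
    · omega
  · rintro (rfl | ⟨h1, h2, h3⟩)
    · exact ⟨hn, by omega, by simp⟩
    · exact ⟨h1, by omega, by rw [if_pos h2, h3]⟩

theorem children_graft_add (hf : ∀ i, 0 < i → i < n → f i < i) (k : ℕ) :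
    children (n + m) (graftParent n f g) (n + k) = (children m g k).map (addLeftEmbedding n) := by
  ext j
  simp only [mem_children, mem_map, addLeftEmbedding_apply, graftParent]
  constructor
  · rintro ⟨h1, h2, h3⟩
    split_ifs at h3 with hj hj2
    · have := hf j h1 hj; omega
    · omega
    · exact ⟨j - n, ⟨by omega, by omega, by omega⟩, by omega⟩
  · rintro ⟨a, ⟨ha1, ha2, ha3⟩, rfl⟩
    refine ⟨by omega, by omega, ?_⟩
    rw [if_neg (by omega), if_neg (by omega), Nat.add_sub_cancel_left, ha3]

theorem sum_children_graft_add (hf : ∀ i, 0 < i → i < n → f i < i) (k : ℕ) :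
    ∑ j ∈ children (n + m) (graftParent n f g) (n + k), graftWeight n x y c j =
      c * ∑ j ∈ children m g k, y j := by
  rw [children_graft_add hf, sum_map, mul_sum]
  exact sum_congr rfl fun j _ => graftWeight_add j

theorem sum_children_graft_of_lt (v : ℕ) :
    ∑ j ∈ children n f v, graftWeight n x y c j = ∑ j ∈ children n f v, x j :=
  sum_congr rfl fun _ hj => graftWeight_of_lt (mem_children.1 hj).2.1

end graft

theorem IsEigenTree.graft {m : ℕ} {g : ℕ → ℕ} {x y : ℕ → ℝ} (A : IsEigenTree r α n f x)
    (B : IsEigenTree r α m g y) {q : ℝ} (hq : 0 < q) (hBcard : #(children m g 0) < r)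
    (hBroot : #(children m g 0) + ∑ j ∈ children m g 0, y j = α - 1 - q) :
    IsEigenTree r α (n + m) (graftParent n f g) (graftWeight n x y q⁻¹) where
  pos := Nat.add_pos_left A.pos m
  parent_lt i hi0 hi := by
    rcases lt_or_ge i n with h | h
    · rw [graftParent_of_lt h]
      exact A.parent_lt i hi0 h
    obtain ⟨k, rfl⟩ := Nat.exists_eq_add_of_le h
    rcases Nat.eq_zero_or_pos k with rfl | hk
    · rw [add_zero, graftParent_self]
      exact A.pos
    · rw [graftParent_add hk]
      have := B.parent_lt k hk (by omega)
      omega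
  weight_pos i hi := by
    rcases lt_or_ge i n with h | h
    · rw [graftWeight_of_lt h]
      exact A.weight_pos i h
    obtain ⟨k, rfl⟩ := Nat.exists_eq_add_of_le h
    rw [graftWeight_add]
    exact mul_pos (inv_pos.2 hq) (B.weight_pos k (by omega))
  weight_zero := by rw [graftWeight_of_lt A.pos, A.weight_zero]
  card_children_lt v hv0 hv := by
    rcases lt_or_ge v n with h | h
    · rw [children_graft_of_lt B.pos hv0 h]
      exact A.card_children_lt v hv0 h
    obtain ⟨k, rfl⟩ := Nat.exists_eq_add_of_le h
    rw [children_graft_add A.parent_lt, card_map]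
    rcases Nat.eq_zero_or_pos k with rfl | hk
    · exact hBcard
    · exact B.card_children_lt k hk (by omega)
  eigen_eq v hv0 hv := by
    rcases lt_or_ge v n with h | h
    · rw [children_graft_of_lt B.pos hv0 h, sum_children_graft_of_lt, graftWeight_of_lt h,
        graftParent_of_lt h, graftWeight_of_lt ((A.parent_lt v hv0 h).trans h)]
      exact A.eigen_eq v hv0 h
    obtain ⟨k, rfl⟩ := Nat.exists_eq_add_of_le h
    rw [sum_children_graft_add A.parent_lt, children_graft_add A.parent_lt, card_map,
      graftWeight_add]
    rcases Nat.eq_zero_or_pos k with rfl | hk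
    · rw [add_zero, graftParent_self, graftWeight_of_lt A.pos, A.weight_zero, B.weight_zero]
      linear_combination q⁻¹ * hBroot - mul_inv_cancel₀ hq.ne'
    · rw [graftParent_add hk, graftWeight_add]
      linear_combination q⁻¹ * B.eigen_eq k hk (by omega)

theorem exists_isEigenTree_of_isBranchRatio :
    ∀ (s : ℕ) (q : Fin s → ℝ), (∀ i, IsBranchRatio r α (q i)) →
      ∃ n f x, IsEigenTree r α n f x ∧ #(children n f 0) = s ∧
        ∑ j ∈ children n f 0, x j = ∑ i, (q i)⁻¹
  | 0, _, _ => ⟨1, _, _, isEigenTree_one, by simp [children_one], by simp [children_one]⟩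
  | s + 1, q, hq => by
    obtain ⟨n, f, x, A, hcard, hsum⟩ :=
      exists_isEigenTree_of_isBranchRatio s (q ∘ Fin.castSucc) fun i => hq _
    obtain ⟨hq_pos, m, g, y, B, hBcard, hBroot⟩ := hq (Fin.last s)
    refine ⟨n + m, _, _, A.graft B hq_pos hBcard hBroot, ?_, ?_⟩
    · rw [children_graft_zero A.pos B.pos, card_insert_of_notMem, hcard]
      exact fun h => (mem_children.1 h).2.1.false
    · rw [children_graft_zero A.pos B.pos, sum_insert, graftWeight_self, B.weight_zero,
        sum_children_graft_of_lt, hsum, Fin.sum_univ_castSucc, add_comm, mul_one]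
      · rfl
      · exact fun h => (mem_children.1 h).2.1.false

section

variable {x : ℕ → ℝ}

theorem IsEigenTree.degree_le (A : IsEigenTree r α n f x) (hcard_root : #(children n f 0) ≤ r)
    [DecidableRel (graph n f).Adj] (a : Fin n) : (graph n f).degree a ≤ r := by
  rw [degree_graph A.parent_lt]
  split_ifs with h0
  · rwa [h0]
  · exact A.card_children_lt a (Nat.pos_of_ne_zero h0) a.isLt

theorem IsEigenTree.signlessLapMatrix_mulVec (A : IsEigenTree r α n f x)
    (hroot : #(children n f 0) + ∑ j ∈ children n f 0, x j = α)
    [DecidableEq (Fin n)] [DecidableRel (graph n f).Adj] :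
    (graph n f).signlessLapMatrix ℝ *ᵥ (fun a : Fin n => x a) = α • fun a : Fin n => x a := by
  funext a
  rw [SimpleGraph.signlessLapMatrix_mulVec_apply, degree_graph A.parent_lt,
    sum_neighborFinset_graph A.parent_lt, Pi.smul_apply, smul_eq_mul]
  split_ifs with h0
  · rw [h0, A.weight_zero]
    push_cast
    linarith
  · have := A.eigen_eq a (Nat.pos_of_ne_zero h0) a.isLt
    push_cast
    linarith

end

end ParentTree

theorem LSet.isBranchRatio {r : ℕ} {α : ℝ} (hr : 1 ≤ r) (hα : 1 < α) {q : ℝ} (h : LSet r α q) :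
    ParentTree.IsBranchRatio r α q := by
  induction h with
  | base =>
    exact ⟨by linarith, 1, _, _, ParentTree.isEigenTree_one,
      by simpa [ParentTree.children_one], by simp [ParentTree.children_one]⟩
  | step s _ hsr q _ hpos ih =>
    obtain ⟨n, f, x, A, hcard, hsum⟩ := ParentTree.exists_isEigenTree_of_isBranchRatio s q ih
    exact ⟨hpos, n, f, x, A, by omega, by rw [hcard, hsum]; ring⟩

theorem stmt_7 (r : ℕ) (hr : 1 ≤ r) (α : ℝ) (hα : 2 ≤ α)
    (s : ℕ) (hs1 : 1 ≤ s) (hsr : s ≤ r) (q : Fin s → ℝ)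
    (hmem : ∀ i, LSet r α (q i)) (hsum : ∑ i, (q i)⁻¹ = α - (s : ℝ)) :
    ∃ (n : ℕ) (G : SimpleGraph (Fin n)),
      2 ≤ n ∧ G.IsTree ∧ maxDeg G ≤ r ∧ IsLapSpecRad G α := by
  obtain ⟨n, f, x, A, hcard, hsum'⟩ := ParentTree.exists_isEigenTree_of_isBranchRatio s q
    fun i => (hmem i).isBranchRatio hr (by linarith)
  have hroot : #(ParentTree.children n f 0) + ∑ j ∈ ParentTree.children n f 0, x j = α := by
    rw [hcard, hsum', hsum]
    ring
  have hT := ParentTree.graph_isTree A.parent_lt A.pos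
  have := hT.1.nonempty
  classical
  refine ⟨n, ParentTree.graph n f, ?_, hT, ?_, isLapSpecRad_of_colorable_two hT.colorable_two
    (fun a => A.weight_pos a a.isLt) (A.signlessLapMatrix_mulVec hroot)⟩
  · have := ParentTree.card_children_lt_self (f := f) A.pos 0
    omega
  · exact SimpleGraph.maxDegree_le_of_forall_degree_le _ _ (A.degree_le (hcard ▸ hsr))
end

section
/- For every positive integer k ≥ 1, the number (4k+3)/(2k+1) belongs to ℒ_{6k+1}(6k+4), and (4k+3) · ((2k+1)/(4k+3)) = (6k+4) − (4k+3). -/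
open Finset

/-
Taking all `s` summands equal to the base element `α - 1` gives
`α - 1 - s - s / (α - 1) ∈ ℒ_r(α)` whenever this is positive. For `α = 6k + 4` and `s = 6k`
this is `3 - 2k / (2k + 1) = (4k + 3) / (2k + 1)`.
-/

theorem LSet.sub_sub_div_base {r s : ℕ} {α : ℝ} (hs1 : 1 ≤ s) (hsr : s ≤ r - 1)
    (hpos : 0 < α - 1 - s - s / (α - 1)) :
    LSet r α (α - 1 - s - s / (α - 1)) := by
  have hsum : ∑ _i : Fin s, (α - 1)⁻¹ = s / (α - 1) := by
    rw [sum_const, card_univ, Fintype.card_fin, nsmul_eq_mul, div_eq_mul_inv]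
  rw [← hsum] at hpos ⊢
  exact LSet.step s hs1 hsr _ (fun _ => LSet.base) hpos

theorem stmt_16 (k : ℕ) (hk : 1 ≤ k) :
    LSet (6 * k + 1) (6 * (k : ℝ) + 4) ((4 * (k : ℝ) + 3) / (2 * (k : ℝ) + 1)) ∧
      (4 * (k : ℝ) + 3) * ((2 * (k : ℝ) + 1) / (4 * (k : ℝ) + 3)) =
        (6 * (k : ℝ) + 4) - (4 * (k : ℝ) + 3) := by
  have hval :
      (6 * (k : ℝ) + 4) - 1 - ((6 * k : ℕ) : ℝ) - ((6 * k : ℕ) : ℝ) / ((6 * (k : ℝ) + 4) - 1) =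
        (4 * (k : ℝ) + 3) / (2 * (k : ℝ) + 1) := by
    have h2 : (2 * (k : ℝ) + 1) ≠ 0 := by positivity
    rw [show (6 * (k : ℝ) + 4) - 1 = 3 * (2 * k + 1) by ring]
    push_cast
    field_simp
    ring
  constructor
  · rw [← hval]
    refine LSet.sub_sub_div_base (by omega) (by omega) ?_
    rw [hval]
    positivity
  · field_simp
    ring
end
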